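/- arXiv:1207.1690 — 3 statements merged into one kernel-verified Lean document; each statement's English description precedes it below -/
import Mathlib

section
/- Discrete RDSI generation theorem, part 1 (existence and uniqueness of generator): For every discrete-time (T = ℤ) RDSI (θ,φ,𝒰), there exists a unique map f: Ω × X × U → X that is (F⊗B(X)⊗B(U))-measurable, with f(ω,·,ũ) continuous for each (ω,ũ), such that φ(n+1,ω,x,u) = f(θ_n ω, φ(n,ω,x,u), u_n(ω)) for all n ∈ ℤ₊, ω ∈ Ω, x ∈ X, u ∈ 𝒰. The generator is given by f(ω,x,ũ) = φ(1,ω,x,c(ũ)), where c(ũ) is the constant input with value ũ. -/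
open MeasureTheory Filter

/-- Discrete-time concatenation `u ◊_p v`. -/
def concatProcN {Ω U : Type*} (θ : ℤ → Ω → Ω) (p : ℕ) (u v : ℕ → Ω → U) : ℕ → Ω → U :=
  fun τ ω => if τ < p then u τ ω else v (τ - p) (θ (p : ℤ) ω)

/-- Discrete-time shift `ρ_p`. -/
def shiftProcN {Ω U : Type*} (θ : ℤ → Ω → Ω) (p : ℕ) (u : ℕ → Ω → U) : ℕ → Ω → U :=
  fun t ω => u (t + p) (θ (-(p : ℤ)) ω)

/-- Every discrete RDSI has a unique generator `f`: a measurable map,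
continuous in the state, with `φ(n+1,ω,x,u) = f(θ_n ω, φ(n,ω,x,u), u_n(ω))`; it is given by
`f(ω,x,ũ) = φ(1,ω,x,c(ũ))`. -/
theorem discrete_rdsi_generator
    {Ω : Type*} [MeasurableSpace Ω]
    (θ : ℤ → Ω → Ω)
    (hθmeas : ∀ n, Measurable (θ n))
    (hθ0 : ∀ ω, θ 0 ω = ω)
    (hθadd : ∀ m n : ℤ, ∀ ω, θ (m + n) ω = θ m (θ n ω))
    {X U : Type*} [MeasurableSpace X] [TopologicalSpace X] [MeasurableSpace U]
    (𝒰 : Set (ℕ → Ω → U))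
    (hconst : ∀ c : U, (fun (_ : ℕ) (_ : Ω) => c) ∈ 𝒰)
    (hconcat : ∀ u ∈ 𝒰, ∀ v ∈ 𝒰, ∀ p : ℕ, concatProcN θ p u v ∈ 𝒰)
    (hshift : ∀ u ∈ 𝒰, ∀ p : ℕ, shiftProcN θ p u ∈ 𝒰)
    (φ : ℕ → Ω → X → (ℕ → Ω → U) → X)
    (hI1 : ∀ u ∈ 𝒰, Measurable fun p : ℕ × Ω × X => φ p.1 p.2.1 p.2.2 u)
    (hI1' : Measurable fun p : ℕ × Ω × X × U =>
        φ p.1 p.2.1 p.2.2.1 (fun _ _ => p.2.2.2))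
    (hI2 : ∀ n ω, ∀ u ∈ 𝒰, Continuous fun x => φ n ω x u)
    (hI3 : ∀ ω x, ∀ u ∈ 𝒰, φ 0 ω x u = x)
    (hI4 : ∀ p n : ℕ, ∀ ω x, ∀ u ∈ 𝒰, ∀ v ∈ 𝒰,
        φ (p + n) ω x (concatProcN θ p u v) = φ n (θ (p : ℤ) ω) (φ p ω x u) v)
    (hI5 : ∀ n : ℕ, ∀ ω x, ∀ u ∈ 𝒰, ∀ v ∈ 𝒰,
        (∀ j : ℕ, j < n → u j ω = v j ω) → φ n ω x u = φ n ω x v) :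
    -- the generator `f₀(ω,x,ũ) = φ(1,ω,x,c(ũ))` has the required properties
    (Measurable fun p : Ω × X × U => φ 1 p.1 p.2.1 (fun _ _ => p.2.2)) ∧
    (∀ ω (c : U), Continuous fun x => φ 1 ω x (fun _ _ => c)) ∧
    (∀ n : ℕ, ∀ ω x, ∀ u ∈ 𝒰,
        φ (n + 1) ω x u = φ 1 (θ (n : ℤ) ω) (φ n ω x u) (fun _ _ => u n ω)) ∧
    -- and it is the unique such map
    (∀ f : Ω → X → U → X,
        (Measurable fun p : Ω × X × U => f p.1 p.2.1 p.2.2) →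
        (∀ ω c, Continuous fun x => f ω x c) →
        (∀ n : ℕ, ∀ ω x, ∀ u ∈ 𝒰, φ (n + 1) ω x u = f (θ (n : ℤ) ω) (φ n ω x u) (u n ω)) →
        ∀ ω x c, f ω x c = φ 1 ω x (fun _ _ => c)) := by
  refine ⟨?_, ?_, ?_, ?_⟩
  · exact hI1'.comp (measurable_const.prodMk measurable_id)
  · intro ω c
    exact hI2 1 ω _ (hconst c)
  · intro n ω x u hu
    have hv : concatProcN θ n u (fun _ _ => u n ω) ∈ 𝒰 :=
      hconcat u hu _ (hconst (u n ω)) n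
    have h5 := hI5 (n + 1) ω x u hu _ hv (by
      intro j hj
      simp only [concatProcN]
      rcases lt_or_eq_of_le (Nat.lt_succ_iff.mp hj) with h | h
      · simp [h]
      · simp [h])
    rw [h5, hI4 n 1 ω x u hu _ (hconst (u n ω)), hI5 1 (θ (n:ℤ) ω) (φ n ω x u) _
      (hconst (u n ω)) _ (hconst (u n ω)) (fun j hj => rfl)]
  · intro f hfm hfc hfcoc ω x c
    have := hfcoc 0 ω x (fun _ _ => c) (hconst c)
    simp only [Nat.cast_zero, hθ0, hI3 ω x _ (hconst c), Nat.zero_add] at this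
    exact this.symm
end

section
/- Discrete RDSI generation theorem, part 2 (generated systems are RDSI's): Let θ be an MPDS with T = ℤ, 𝒰 a set of θ-inputs, and f: Ω × X × U → X a measurable map with f(ω,·,ũ) continuous for each (ω,ũ). Define φ recursively by φ(0,ω,x,u) := x and φ(n+1,ω,x,u) := f(θ_n ω, φ(n,ω,x,u), u_n(ω)). Then (θ,φ,𝒰) is an RDSI: φ satisfies axioms (I1), (I1'), (I2), (I3), (I4), and (I5). -/
open MeasureTheory Filter

structure IsGeneratedBy {Ω X U : Type*} (θ : ℤ → Ω → Ω) (f : Ω → X → U → X)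
    (φ : ℕ → Ω → X → (ℕ → Ω → U) → X) : Prop where
  zero : ∀ ω x u, φ 0 ω x u = x
  succ : ∀ n : ℕ, ∀ ω x u, φ (n + 1) ω x u = f (θ (n : ℤ) ω) (φ n ω x u) (u n ω)

namespace IsGeneratedBy

variable {Ω X U : Type*} {θ : ℤ → Ω → Ω} {f : Ω → X → U → X}
  {φ : ℕ → Ω → X → (ℕ → Ω → U) → X}

theorem congr_input (h : IsGeneratedBy θ f φ) {n : ℕ} {ω : Ω} (x : X) {u v : ℕ → Ω → U}
    (huv : ∀ j < n, u j ω = v j ω) : φ n ω x u = φ n ω x v := by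
  induction n with
  | zero => rw [h.zero, h.zero]
  | succ n ih =>
    rw [h.succ, h.succ, ih fun j hj => huv j (Nat.lt_succ_of_lt hj), huv n n.lt_succ_self]

theorem continuous [TopologicalSpace X] (h : IsGeneratedBy θ f φ)
    (hf : ∀ ω c, Continuous fun x => f ω x c) (n : ℕ) (ω : Ω) (u : ℕ → Ω → U) :
    Continuous fun x => φ n ω x u := by
  induction n with
  | zero => simpa only [h.zero] using continuous_id'
  | succ n ih => simpa only [h.succ] using (hf _ _).comp' ih

theorem apply_add_concat (h : IsGeneratedBy θ f φ)
    (hθ : ∀ m n : ℤ, ∀ ω, θ (m + n) ω = θ m (θ n ω)) (p n : ℕ) (ω : Ω) (x : X)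
    (u v : ℕ → Ω → U) :
    φ (p + n) ω x (concatProcN θ p u v) = φ n (θ (p : ℤ) ω) (φ p ω x u) v := by
  induction n with
  | zero =>
    rw [h.zero]
    exact h.congr_input x fun j hj => if_pos hj
  | succ n ih =>
    have hshift : θ ((p + n : ℕ) : ℤ) ω = θ (n : ℤ) (θ (p : ℤ) ω) := by
      rw [Nat.cast_add, add_comm, hθ]
    have hinput : concatProcN θ p u v (p + n) ω = v n (θ (p : ℤ) ω) := by
      simp [concatProcN]
    rw [← Nat.add_assoc, h.succ, h.succ, ih, hshift, hinput]

theorem measurable_comp [MeasurableSpace Ω] [MeasurableSpace X] [MeasurableSpace U]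
    {β : Type*} [MeasurableSpace β] (h : IsGeneratedBy θ f φ) (hθ : ∀ n, Measurable (θ n))
    (hf : Measurable fun p : Ω × X × U => f p.1 p.2.1 p.2.2)
    {ω : β → Ω} {x : β → X} {w : β → ℕ → Ω → U} (hω : Measurable ω) (hx : Measurable x)
    (hw : ∀ n, Measurable fun b => w b n (ω b)) (n : ℕ) :
    Measurable fun b => φ n (ω b) (x b) (w b) := by
  induction n with
  | zero => simpa only [h.zero] using hx
  | succ n ih =>
    simp only [h.succ]
    exact hf.comp (((hθ _).comp hω).prodMk (ih.prodMk (hw n)))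

theorem measurable_uncurry [MeasurableSpace Ω] [MeasurableSpace X] [MeasurableSpace U]
    {β : Type*} [MeasurableSpace β] (h : IsGeneratedBy θ f φ) (hθ : ∀ n, Measurable (θ n))
    (hf : Measurable fun p : Ω × X × U => f p.1 p.2.1 p.2.2)
    {ω : β → Ω} {x : β → X} {w : β → ℕ → Ω → U} (hω : Measurable ω) (hx : Measurable x)
    (hw : ∀ n, Measurable fun b => w b n (ω b)) :
    Measurable fun p : ℕ × β => φ p.1 (ω p.2) (x p.2) (w p.2) :=
  measurable_from_prod_countable_right fun n => h.measurable_comp hθ hf hω hx hw n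

end IsGeneratedBy

theorem generated_discrete_system_is_rdsi_general
    {Ω : Type*} [MeasurableSpace Ω]
    (θ : ℤ → Ω → Ω)
    (hθmeas : ∀ n, Measurable (θ n))
    (hθadd : ∀ m n : ℤ, ∀ ω, θ (m + n) ω = θ m (θ n ω))
    {X U : Type*} [MeasurableSpace X] [TopologicalSpace X] [MeasurableSpace U]
    (𝒰 : Set (ℕ → Ω → U))
    (hUmeas : ∀ u ∈ 𝒰, ∀ n : ℕ, Measurable (u n))
    (f : Ω → X → U → X)
    (hG1 : Measurable fun p : Ω × X × U => f p.1 p.2.1 p.2.2)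
    (hG2 : ∀ ω c, Continuous fun x => f ω x c)
    (φ : ℕ → Ω → X → (ℕ → Ω → U) → X)
    (hφ0 : ∀ ω x u, φ 0 ω x u = x)
    (hφrec : ∀ n : ℕ, ∀ ω x u, φ (n + 1) ω x u = f (θ (n : ℤ) ω) (φ n ω x u) (u n ω)) :
    -- (I1)
    (∀ u ∈ 𝒰, Measurable fun p : ℕ × Ω × X => φ p.1 p.2.1 p.2.2 u) ∧
    -- (I1')
    (Measurable fun p : ℕ × Ω × X × U => φ p.1 p.2.1 p.2.2.1 (fun _ _ => p.2.2.2)) ∧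
    -- (I2)
    (∀ n ω u, Continuous fun x => φ n ω x u) ∧
    -- (I3)
    (∀ ω x u, φ 0 ω x u = x) ∧
    -- (I4)
    (∀ p n : ℕ, ∀ ω x, ∀ u ∈ 𝒰, ∀ v ∈ 𝒰,
        φ (p + n) ω x (concatProcN θ p u v) = φ n (θ (p : ℤ) ω) (φ p ω x u) v) ∧
    -- (I5)
    (∀ n : ℕ, ∀ ω x, ∀ u ∈ 𝒰, ∀ v ∈ 𝒰,
        (∀ j : ℕ, j < n → u j ω = v j ω) → φ n ω x u = φ n ω x v) := by
  have h : IsGeneratedBy θ f φ := ⟨hφ0, hφrec⟩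
  refine ⟨fun u hu => ?_, ?_, h.continuous hG2, hφ0,
    fun p n ω x u _ v _ => h.apply_add_concat hθadd p n ω x u v,
    fun n ω x u _ v _ huv => h.congr_input x huv⟩
  · exact h.measurable_uncurry hθmeas hG1 measurable_fst measurable_snd
      fun n => (hUmeas u hu n).comp measurable_fst
  · exact h.measurable_uncurry (w := fun b _ _ => b.2.2) hθmeas hG1 measurable_fst
      measurable_snd.fst fun _ => measurable_snd.snd

/-- If `φ` is defined recursively from a generator `f` (measurable,
continuous in the state) by `φ(0,ω,x,u) = x`, `φ(n+1,ω,x,u) = f(θ_n ω, φ(n,ω,x,u), u_n(ω))`,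
then `(θ,φ,𝒰)` is an RDSI: axioms (I1), (I1'), (I2), (I3), (I4), (I5) hold. -/
theorem generated_discrete_system_is_rdsi
    {Ω : Type*} [MeasurableSpace Ω]
    (θ : ℤ → Ω → Ω)
    (hθmeas : ∀ n, Measurable (θ n))
    (hθ0 : ∀ ω, θ 0 ω = ω)
    (hθadd : ∀ m n : ℤ, ∀ ω, θ (m + n) ω = θ m (θ n ω))
    {X U : Type*} [MeasurableSpace X] [TopologicalSpace X] [MeasurableSpace U]
    [TopologicalSpace U]
    (𝒰 : Set (ℕ → Ω → U))
    (hconst : ∀ c : U, (fun (_ : ℕ) (_ : Ω) => c) ∈ 𝒰)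
    (hconcat : ∀ u ∈ 𝒰, ∀ v ∈ 𝒰, ∀ p : ℕ, concatProcN θ p u v ∈ 𝒰)
    (hUmeas : ∀ u ∈ 𝒰, ∀ n : ℕ, Measurable (u n))
    (f : Ω → X → U → X)
    (hG1 : Measurable fun p : Ω × X × U => f p.1 p.2.1 p.2.2)
    (hG2 : ∀ ω c, Continuous fun x => f ω x c)
    (φ : ℕ → Ω → X → (ℕ → Ω → U) → X)
    (hφ0 : ∀ ω x u, φ 0 ω x u = x)
    (hφrec : ∀ n : ℕ, ∀ ω x u, φ (n + 1) ω x u = f (θ (n : ℤ) ω) (φ n ω x u) (u n ω)) :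
    -- (I1)
    (∀ u ∈ 𝒰, Measurable fun p : ℕ × Ω × X => φ p.1 p.2.1 p.2.2 u) ∧
    -- (I1')
    (Measurable fun p : ℕ × Ω × X × U => φ p.1 p.2.1 p.2.2.1 (fun _ _ => p.2.2.2)) ∧
    -- (I2)
    (∀ n ω u, Continuous fun x => φ n ω x u) ∧
    -- (I3)
    (∀ ω x u, φ 0 ω x u = x) ∧
    -- (I4)
    (∀ p n : ℕ, ∀ ω x, ∀ u ∈ 𝒰, ∀ v ∈ 𝒰,
        φ (p + n) ω x (concatProcN θ p u v) = φ n (θ (p : ℤ) ω) (φ p ω x u) v) ∧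
    -- (I5)
    (∀ n : ℕ, ∀ ω x, ∀ u ∈ 𝒰, ∀ v ∈ 𝒰,
        (∀ j : ℕ, j < n → u j ω = v j ω) → φ n ω x u = φ n ω x v) :=
  generated_discrete_system_is_rdsi_general θ hθmeas hθadd 𝒰 hUmeas f hG1 hG2 φ hφ0 hφrec
end

section
/- Cascade pullback identity: Under the hypotheses of the discrete cascade decomposition, for any random initial state z = (x₁,x₂), the second projection of the pullback trajectory of ψ satisfies π₂(ξ̌^z_n(ω)) = (ξ̌₂)^{x₂,(η₁)^{x₁}}_n(ω) for all n ∈ ℤ₊ and ω ∈ Ω; that is, ψ(n, θ_{-n}ω, z(θ_{-n}ω))₂ = φ₂(n, θ_{-n}ω, x₂(θ_{-n}ω), (η₁)^{x₁}), where the input (η₁)^{x₁} is NOT shifted in the pullback. -/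
open MeasureTheory

/-- Cascade pullback identity: with the discrete cascade structure,
the second projection of the pullback trajectory of `ψ` equals the pullback trajectory of
`φ₂` subject to the (unshifted) forward output trajectory `(η₁)^{x₁}`:
`π₂(ψ(n, θ_{-n}ω, z(θ_{-n}ω))) = φ₂(n, θ_{-n}ω, x₂(θ_{-n}ω), (η₁)^{x₁})`. -/
theorem discrete_cascade_pullback_identity
    {Ω X₁ X₂ Y₁ : Type*}
    (θ : ℤ → Ω → Ω)
    (hθ0 : ∀ ω, θ 0 ω = ω)
    (hθadd : ∀ m n : ℤ, ∀ ω, θ (m + n) ω = θ m (θ n ω))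
    (f₁ : Ω → X₁ → X₁) (h₁ : Ω → X₁ → Y₁) (f₂ : Ω → X₂ → Y₁ → X₂)
    (g : Ω → X₁ × X₂ → X₁ × X₂)
    (hg : ∀ ω p, g ω p = (f₁ ω p.1, f₂ ω p.2 (h₁ ω p.1)))
    (ψ : ℕ → Ω → X₁ × X₂ → X₁ × X₂)
    (hψ0 : ∀ ω z, ψ 0 ω z = z)
    (hψrec : ∀ n ω z, ψ (n + 1) ω z = g (θ (n : ℤ) ω) (ψ n ω z))
    (φ₁ : ℕ → Ω → X₁ → X₁)
    (hφ₁0 : ∀ ω x, φ₁ 0 ω x = x)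
    (hφ₁rec : ∀ n ω x, φ₁ (n + 1) ω x = f₁ (θ (n : ℤ) ω) (φ₁ n ω x))
    (φ₂ : ℕ → Ω → X₂ → (ℕ → Ω → Y₁) → X₂)
    (hφ₂0 : ∀ ω x u, φ₂ 0 ω x u = x)
    (hφ₂rec : ∀ n ω x u, φ₂ (n + 1) ω x u = f₂ (θ (n : ℤ) ω) (φ₂ n ω x u) (u n ω))
    (x₁ : Ω → X₁) (x₂ : Ω → X₂) :
    ∀ (n : ℕ) (ω : Ω),
      (ψ n (θ (-(n : ℤ)) ω) (x₁ (θ (-(n : ℤ)) ω), x₂ (θ (-(n : ℤ)) ω))).2 =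
        φ₂ n (θ (-(n : ℤ)) ω) (x₂ (θ (-(n : ℤ)) ω))
          (fun m ω' => h₁ (θ (m : ℤ) ω') (φ₁ m ω' (x₁ ω'))) := by
  have key : ∀ (n : ℕ) (ω : Ω),
      ψ n ω (x₁ ω, x₂ ω) =
        (φ₁ n ω (x₁ ω),
          φ₂ n ω (x₂ ω) (fun m ω' => h₁ (θ (m : ℤ) ω') (φ₁ m ω' (x₁ ω')))) := by
    intro n ω
    induction n with
    | zero => simp [hψ0, hφ₁0, hφ₂0]
    | succ k ih =>
      rw [hψrec, ih, hg, hφ₁rec, hφ₂rec]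
  intro n ω
  rw [key n (θ (-(n : ℤ)) ω)]
end
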